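/- In the extremal setup, the spectral radius satisfies λ₁(G*) > n − k, where k − 1 is the shortest distance between a vertex of minimum principal-eigenvector entry and a vertex of maximum entry. -/

import Mathlib

open Classical Matrix

/-- The adjacency matrix of a simple graph on `Fin n`, with real entries. -/
noncomputable def adjMat {n : ℕ} (G : SimpleGraph (Fin n)) : Matrix (Fin n) (Fin n) ℝ :=
  Matrix.of fun u v => if G.Adj u v then (1 : ℝ) else 0

/-- `x` is a principal (Perron) eigenvector of the connected graph `G` with eigenvalue `lam`:
it is a positive eigenvector of the adjacency matrix.  By Perron–Frobenius, for a connected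
graph this forces `lam = λ₁(G)`. -/
def IsPrincipalEigenpair {n : ℕ} (G : SimpleGraph (Fin n)) (lam : ℝ) (x : Fin n → ℝ) : Prop :=
  (∀ v, 0 < x v) ∧ adjMat G *ᵥ x = lam • x

/-- The ratio of the maximum to the minimum entry of a vector. -/
noncomputable def pRatio {n : ℕ} (x : Fin n → ℝ) : ℝ := (⨆ v, x v) / (⨅ v, x v)

/-- Degree of a vertex. -/
noncomputable def deg {n : ℕ} (G : SimpleGraph (Fin n)) (v : Fin n) : ℕ :=
  (G.neighborSet v).ncard

/-- The kite (lollipop) graph on `Fin n`: a path on the vertices `0, 1, …, r-1`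
followed by a clique on the vertices `r-1, r, …, n-1`, i.e. `P_r · K_{n-r+1}`. -/
def kiteGraph (n r : ℕ) : SimpleGraph (Fin n) where
  Adj u v := u ≠ v ∧
    ((u.val < r ∧ v.val < r ∧ (u.val + 1 = v.val ∨ v.val + 1 = u.val)) ∨
      (r ≤ u.val + 1 ∧ r ≤ v.val + 1))
  symm := by
    constructor
    rintro u v ⟨h1, h2⟩
    exact ⟨h1.symm, by tauto⟩
  loopless := by
    constructor
    rintro u ⟨h1, -⟩
    exact h1 rfl

/-!
If `λ₁ ≤ n - k`, the eigenvalue equations along the path `v₁, …, v_k` give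
`x_{i+1} ≤ λ₁ x_i - x_{i-1}` for `x_i = x(v_i)`. For `μ > λ₁`, a Sturm comparison with the
solution `U_{i-1}(μ/2)` of `y_{i+1} = μ y_i - y_{i-1}` yields `1 = x(v_k) < x(v₁) U_{k-1}(μ/2)`.
On the other hand, for a suitable `μ ∈ (n-k, n-k+1)` the kite `P_k · K_{n-k+1}` has a positive
eigenvector equal to `U_{i-1}(μ/2)` along the path and constant on the clique. Its principal
ratio `U_{k-1}(μ/2)` is at most `γ(G*) = 1 / x(v₁)` by extremality, a contradiction. When
`k ≥ n - 1`, the path `v₁v₂v₃` already forces `λ₁ > 1 ≥ n - k`.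
-/

-- `cheb μ j = U_{j-1}(μ/2)`, a Chebyshev polynomial of the second kind.
noncomputable def cheb (μ : ℝ) : ℕ → ℝ
  | 0 => 0
  | 1 => 1
  | j + 2 => μ * cheb μ (j + 1) - cheb μ j

section Cheb

variable {μ : ℝ}

@[simp] lemma cheb_zero : cheb μ 0 = 0 := rfl

@[simp] lemma cheb_one : cheb μ 1 = 1 := rfl

lemma cheb_add_two (j : ℕ) : cheb μ (j + 2) = μ * cheb μ (j + 1) - cheb μ j := rfl

lemma cheb_two : cheb μ 2 = μ := by simp [cheb_add_two]

lemma cheb_nonneg_and_le_succ (hμ : 2 ≤ μ) (j : ℕ) :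
    0 ≤ cheb μ j ∧ cheb μ j ≤ cheb μ (j + 1) := by
  induction j with
  | zero => simp
  | succ j ih =>
    refine ⟨ih.1.trans ih.2, ?_⟩
    rw [cheb_add_two]
    nlinarith [ih.1, ih.2]

lemma cheb_nonneg (hμ : 2 ≤ μ) (j : ℕ) : 0 ≤ cheb μ j := (cheb_nonneg_and_le_succ hμ j).1

lemma cheb_monotone (hμ : 2 ≤ μ) : Monotone (cheb μ) :=
  monotone_nat_of_le_succ fun j => (cheb_nonneg_and_le_succ hμ j).2

lemma one_le_cheb (hμ : 2 ≤ μ) {j : ℕ} (hj : 1 ≤ j) : 1 ≤ cheb μ j :=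
  cheb_one (μ := μ) ▸ cheb_monotone hμ hj

lemma continuous_cheb (j : ℕ) : Continuous fun μ => cheb μ j := by
  induction j using Nat.strong_induction_on with
  | _ j ih =>
    match j with
    | 0 => exact continuous_const
    | 1 => exact continuous_const
    | j + 2 => exact (continuous_id.mul (ih (j + 1) (by omega))).sub (ih j (by omega))

-- At such a root the junction and clique equations of the kite eigenvector are consistent.
lemma exists_cheb_root {d : ℝ} (hd : 2 ≤ d) {k : ℕ} (hk : 2 ≤ k) :
    ∃ μ, d < μ ∧ μ < d + 1 ∧ (μ - (d - 1)) * cheb μ (k + 1) = d * cheb μ k := by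
  set f : ℝ → ℝ := fun μ => (μ - (d - 1)) * cheb μ (k + 1) - d * cheb μ k
  have hf : ContinuousOn f (Set.Icc d (d + 1)) :=
    (((continuous_id.sub continuous_const).mul (continuous_cheb _)).sub
      (continuous_const.mul (continuous_cheb _))).continuousOn
  obtain ⟨j, rfl⟩ : ∃ j, k = j + 2 := ⟨k - 2, by omega⟩
  have hfd : f d < 0 := by
    have := one_le_cheb hd (j := j + 1) (by omega)
    simp only [f, cheb_add_two (j + 1)]
    nlinarith [cheb_nonneg hd (j + 2)]
  have hfd1 : 0 < f (d + 1) := by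
    have hd1 : 2 ≤ d + 1 := by linarith
    have := one_le_cheb hd1 (j := j + 2) (by omega)
    have := (cheb_nonneg_and_le_succ hd1 (j + 1)).2
    simp only [f, cheb_add_two (j + 1)]
    nlinarith [cheb_nonneg hd1 (j + 1)]
  obtain ⟨μ, ⟨hdμ, hμd⟩, hμ⟩ := intermediate_value_Ioo (by linarith) hf ⟨hfd, hfd1⟩
  exact ⟨μ, hdμ, hμd, sub_eq_zero.mp hμ⟩

end Cheb

lemma adjMat_mulVec_apply {n : ℕ} (G : SimpleGraph (Fin n)) (x : Fin n → ℝ) (u : Fin n) :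
    (adjMat G *ᵥ x) u = ∑ w ∈ G.neighborFinset u, x w := by
  rw [← SimpleGraph.adjMatrix_mulVec_apply]
  rfl

lemma pRatio_eq_div {n : ℕ} {x : Fin n → ℝ} {a b : Fin n} (ha : ∀ u, x u ≤ x a)
    (hb : ∀ u, x b ≤ x u) : pRatio x = x a / x b := by
  have : Nonempty (Fin n) := ⟨a⟩
  have hsup : (⨆ u, x u) = x a :=
    le_antisymm (ciSup_le ha) (le_ciSup (Set.finite_range x).bddAbove a)
  have hinf : (⨅ u, x u) = x b :=
    le_antisymm (ciInf_le (Set.finite_range x).bddBelow b) (le_ciInf hb)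
  rw [pRatio, hsup, hinf]

section Comparison

variable {Y : ℕ → ℝ} {lam μ : ℝ} {k : ℕ}

lemma mul_cheb_lt_mul_cheb_of_le (hμ : 2 ≤ μ) (hlam : lam < μ) (hpos : ∀ i < k, 0 < Y i)
    (h1 : Y 1 ≤ lam * Y 0) (h2 : ∀ i, i + 2 < k → Y i + Y (i + 2) ≤ lam * Y (i + 1)) :
    ∀ i, i + 2 ≤ k → Y (i + 1) * cheb μ (i + 1) < Y i * cheb μ (i + 2) := by
  intro i hi
  induction i with
  | zero =>
    have := hpos 0 (by omega)
    rw [cheb_one, cheb_two]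
    nlinarith
  | succ i ih =>
    have hY := h2 i hi
    have hc := cheb_nonneg hμ (i + 2)
    have hYc := mul_nonneg (hpos (i + 1) (by omega)).le hc
    rw [cheb_add_two (i + 1)]
    nlinarith [ih (by omega)]

lemma lt_mul_cheb_of_le (hμ : 2 ≤ μ) (hlam : lam < μ) (hpos : ∀ i < k, 0 < Y i)
    (h1 : Y 1 ≤ lam * Y 0) (h2 : ∀ i, i + 2 < k → Y i + Y (i + 2) ≤ lam * Y (i + 1)) :
    ∀ i, i + 2 ≤ k → Y (i + 1) < Y 0 * cheb μ (i + 2) := by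
  have hS := mul_cheb_lt_mul_cheb_of_le hμ hlam hpos h1 h2
  intro i hi
  induction i with
  | zero => simpa using hS 0 hi
  | succ i ih =>
    have hYc : Y (i + 1) * cheb μ (i + 3) ≤ Y 0 * cheb μ (i + 2) * cheb μ (i + 3) :=
      mul_le_mul_of_nonneg_right (ih (by omega)).le (cheb_nonneg hμ _)
    refine lt_of_mul_lt_mul_right ?_ (cheb_nonneg hμ (i + 2))
    nlinarith [hS (i + 1) hi]

end Comparison

namespace IsPrincipalEigenpair

variable {n : ℕ} {G : SimpleGraph (Fin n)} {lam : ℝ} {x : Fin n → ℝ}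

lemma sum_le_mul (h : IsPrincipalEigenpair G lam x) {b : Fin n} {s : Finset (Fin n)}
    (hs : s ⊆ G.neighborFinset b) : ∑ w ∈ s, x w ≤ lam * x b := by
  have hb := congrFun h.2 b
  rw [adjMat_mulVec_apply, Pi.smul_apply, smul_eq_mul] at hb
  exact hb ▸ Finset.sum_le_sum_of_subset_of_nonneg hs fun w _ _ => (h.1 w).le

lemma le_mul_of_adj (h : IsPrincipalEigenpair G lam x) {a b : Fin n} (hab : G.Adj b a) :
    x a ≤ lam * x b := by
  simpa using h.sum_le_mul (s := {a}) (by simpa using hab)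

lemma add_le_mul_of_adj (h : IsPrincipalEigenpair G lam x) {a b c : Fin n} (hab : G.Adj b a)
    (hbc : G.Adj b c) (hac : a ≠ c) : x a + x c ≤ lam * x b := by
  simpa [Finset.sum_pair hac] using
    h.sum_le_mul (s := {a, c}) (by simp [Finset.insert_subset_iff, hab, hbc])

lemma one_lt_of_adj_of_adj (h : IsPrincipalEigenpair G lam x) {a b c : Fin n} (hab : G.Adj a b)
    (hbc : G.Adj b c) (hac : a ≠ c) : 1 < lam := by
  have hba := h.le_mul_of_adj hab
  have habc := h.add_le_mul_of_adj hab.symm hbc hac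
  have := h.1 a; have := h.1 b; have := h.1 c
  by_contra! hlam
  nlinarith

lemma lt_mul_cheb_of_path {k : ℕ} (hk : 2 ≤ k) {μ : ℝ} (h : IsPrincipalEigenpair G lam x)
    (hμ : 2 ≤ μ) (hlam : lam < μ)
    (v : Fin k → Fin n) (hinj : Function.Injective v)
    (hpath : ∀ (i : ℕ) (hi : i + 1 < k), G.Adj (v ⟨i, by omega⟩) (v ⟨i + 1, hi⟩)) :
    x (v ⟨k - 1, by omega⟩) < x (v ⟨0, by omega⟩) * cheb μ k := by
  set Y : ℕ → ℝ := fun i => if hi : i < k then x (v ⟨i, hi⟩) else 0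
  have hY : ∀ i (hi : i < k), Y i = x (v ⟨i, hi⟩) := fun i hi => dif_pos hi
  have hpos : ∀ i < k, 0 < Y i := fun i hi => hY i hi ▸ h.1 _
  have h1 : Y 1 ≤ lam * Y 0 := by
    rw [hY 0 (by omega), hY 1 (by omega)]
    exact h.le_mul_of_adj (hpath 0 (by omega))
  have h2 : ∀ i, i + 2 < k → Y i + Y (i + 2) ≤ lam * Y (i + 1) := by
    intro i hi
    rw [hY i (by omega), hY (i + 1) (by omega), hY (i + 2) hi]
    refine h.add_le_mul_of_adj (hpath i (by omega)).symm (hpath (i + 1) hi) fun heq => ?_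
    simpa using hinj heq
  have := lt_mul_cheb_of_le hμ hlam hpos h1 h2 (k - 2) (by omega)
  rwa [show k - 2 + 1 = k - 1 by omega, show k - 2 + 2 = k by omega, hY _ (by omega),
    hY _ (by omega)] at this

end IsPrincipalEigenpair


section Kite

variable {n k : ℕ}

lemma kiteGraph_adj_iff {u w : Fin n} : (kiteGraph n k).Adj u w ↔ u.val ≠ w.val ∧
    ((u.val < k ∧ w.val < k ∧ (u.val + 1 = w.val ∨ w.val + 1 = u.val)) ∨
      (k ≤ u.val + 1 ∧ k ≤ w.val + 1)) := by
  simp [kiteGraph, Fin.ext_iff]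

lemma kiteGraph_connected (hk : 0 < k) (hkn : k ≤ n) : (kiteGraph n k).Connected := by
  have h0 : 0 < n := by omega
  have hreach : ∀ i (hi : i < n), (kiteGraph n k).Reachable ⟨i, hi⟩ ⟨0, h0⟩ := by
    intro i
    induction i using Nat.strong_induction_on with
    | _ i ih =>
      intro hi
      rcases Nat.eq_zero_or_pos i with rfl | hi0
      · rfl
      rcases lt_or_ge i k with hik | hik
      · have hadj : (kiteGraph n k).Adj ⟨i, hi⟩ ⟨i - 1, by omega⟩ := by
          simp only [kiteGraph_adj_iff]; omega
        exact hadj.reachable.trans (ih _ (by omega) _)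
      · have hadj : (kiteGraph n k).Adj ⟨i, hi⟩ ⟨k - 1, by omega⟩ := by
          simp only [kiteGraph_adj_iff]; omega
        exact hadj.reachable.trans (ih _ (by omega) _)
  have : Nonempty (Fin n) := ⟨⟨0, h0⟩⟩
  exact .mk fun u w => (hreach u u.isLt).trans (hreach w w.isLt).symm

lemma kiteGraph_neighborFinset_zero (hk : 2 ≤ k) (hkn : k ≤ n) :
    (kiteGraph n k).neighborFinset ⟨0, by omega⟩ = {⟨1, by omega⟩} := by
  ext w; simp [kiteGraph_adj_iff, Fin.ext_iff]; omega

lemma kiteGraph_neighborFinset_of_path (hkn : k ≤ n) {u : Fin n} (hu0 : 0 < u.val)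
    (huk : u.val + 1 < k) :
    (kiteGraph n k).neighborFinset u = {⟨u - 1, by omega⟩, ⟨u + 1, by omega⟩} := by
  ext w; simp [kiteGraph_adj_iff, Fin.ext_iff]; omega

lemma kiteGraph_neighborFinset_junction {u : Fin n} (hk : 2 ≤ k) (hu : u.val + 1 = k) :
    (kiteGraph n k).neighborFinset u = insert ⟨k - 2, by omega⟩ (Finset.Ioi u) := by
  ext w; simp [kiteGraph_adj_iff, Fin.ext_iff, ← Fin.val_fin_lt]; omega

lemma kiteGraph_neighborFinset_of_clique {u : Fin n} (hk : 0 < k) (hu : k ≤ u.val) :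
    (kiteGraph n k).neighborFinset u =
      insert ⟨k - 1, by omega⟩ ((Finset.Ici ⟨k, by omega⟩).erase u) := by
  ext w; simp [kiteGraph_adj_iff, Fin.ext_iff, Fin.le_def]; omega

noncomputable def kiteVec (k : ℕ) (μ c : ℝ) (u : Fin n) : ℝ :=
  if u.val < k then cheb μ (u.val + 1) else c

lemma kiteVec_eigen (hk : 2 ≤ k) (hkn : k < n) {μ c : ℝ}
    (hjunction : ((n : ℝ) - k) * c = cheb μ (k + 1))
    (hclique : cheb μ k + ((n : ℝ) - k - 1) * c = μ * c) :
    adjMat (kiteGraph n k) *ᵥ kiteVec k μ c = μ • kiteVec k μ c := by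
  funext ⟨u, hun⟩
  rw [adjMat_mulVec_apply, Pi.smul_apply, smul_eq_mul]
  rcases Nat.eq_zero_or_pos u with rfl | hu0
  · rw [kiteGraph_neighborFinset_zero hk hkn.le]
    simp [kiteVec, show 0 < k by omega, show 1 < k by omega, cheb_two]
  rcases lt_trichotomy (u + 1) k with huk | rfl | huk
  · rw [kiteGraph_neighborFinset_of_path hkn.le hu0 huk,
      Finset.sum_pair (by simp [Fin.ext_iff])]
    simp only [kiteVec, if_pos huk, if_pos (show u - 1 < k by omega),
      if_pos (show u < k by omega), Nat.sub_add_cancel hu0]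
    linarith [cheb_add_two (μ := μ) u]
  · rw [kiteGraph_neighborFinset_junction hk rfl, Finset.sum_insert (by simp)]
    have hIoi : ∀ w ∈ Finset.Ioi ⟨u, hun⟩, kiteVec (u + 1) μ c w = c := fun w hw => by
      simp only [Finset.mem_Ioi, Fin.lt_def] at hw
      simp [kiteVec, show ¬ w.val < u + 1 by omega]
    rw [Finset.sum_congr rfl hIoi, Finset.sum_const, Fin.card_Ioi, nsmul_eq_mul,
      Nat.cast_sub (by omega), Nat.cast_sub (by omega)]
    simp only [kiteVec, if_pos (show u + 1 - 2 < u + 1 by omega), if_pos (Nat.lt_succ_self u),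
      show u + 1 - 2 + 1 = u by omega]
    push_cast at hjunction ⊢
    linarith [cheb_add_two (μ := μ) u]
  · rw [kiteGraph_neighborFinset_of_clique (u := ⟨u, hun⟩) (by omega) (Nat.lt_succ_iff.mp huk),
      Finset.sum_insert (by simp; omega)]
    have hIci : ∀ w ∈ (Finset.Ici (⟨k, hkn⟩ : Fin n)).erase ⟨u, hun⟩, kiteVec k μ c w = c :=
      fun w hw => by
        simp only [Finset.mem_erase, Finset.mem_Ici, Fin.le_def] at hw
        simp [kiteVec, show ¬ w.val < k by omega]
    rw [Finset.sum_congr rfl hIci, Finset.sum_const, Finset.card_erase_of_mem (by simp; omega),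
      Fin.card_Ici, nsmul_eq_mul, Nat.cast_sub (by omega), Nat.cast_sub (by omega)]
    simp only [kiteVec, if_pos (show k - 1 < k by omega), if_neg (show ¬ u < k by omega),
      Nat.sub_add_cancel (show 1 ≤ k by omega)]
    push_cast
    linarith

end Kite

lemma exists_kite_eigenpair {n k : ℕ} (hk : 2 ≤ k) (hkn : k + 2 ≤ n) :
    ∃ (μ : ℝ) (y : Fin n → ℝ), (n : ℝ) - k < μ ∧ 2 ≤ μ ∧
      IsPrincipalEigenpair (kiteGraph n k) μ y ∧ pRatio y = cheb μ k := by
  set d : ℝ := n - k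
  have hd : 2 ≤ d := by
    have : (k : ℝ) + 2 ≤ n := by exact_mod_cast hkn
    linarith
  obtain ⟨μ, hdμ, hμd, hroot⟩ := exists_cheb_root hd hk
  have hμ : 2 ≤ μ := by linarith
  have hkμ : μ ≤ cheb μ k := by simpa [cheb_two] using cheb_monotone hμ hk
  set c := cheb μ k / (μ - (d - 1))
  have hc : (μ - (d - 1)) * c = cheb μ k := mul_div_cancel₀ _ (by linarith)
  have hc1 : 1 ≤ c := by rw [le_div_iff₀ (by linarith)]; linarith
  have hck : c ≤ cheb μ k := div_le_self (by linarith) (by linarith)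
  have hbounds : ∀ u : Fin n, 1 ≤ kiteVec k μ c u ∧ kiteVec k μ c u ≤ cheb μ k := by
    intro u
    unfold kiteVec
    split_ifs with hu
    · exact ⟨one_le_cheb hμ (by omega), cheb_monotone hμ hu⟩
    · exact ⟨hc1, hck⟩
  refine ⟨μ, kiteVec k μ c, hdμ, hμ, ⟨fun u => by linarith [hbounds u], ?_⟩, ?_⟩
  · refine kiteVec_eigen hk (by omega) ?_ (by linarith)
    have : (μ - (d - 1)) * (d * c) = (μ - (d - 1)) * cheb μ (k + 1) := by
      rw [hroot, ← hc]; ring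
    exact mul_left_cancel₀ (by linarith) this
  · have h0 : kiteVec k μ c (⟨0, by omega⟩ : Fin n) = 1 := by simp [kiteVec]; omega
    have hk1 : kiteVec k μ c (⟨k - 1, by omega⟩ : Fin n) = cheb μ k := by
      simp [kiteVec, Nat.sub_add_cancel (show 1 ≤ k by omega)]; omega
    rw [pRatio_eq_div (fun u => hk1 ▸ (hbounds u).2) (fun u => h0 ▸ (hbounds u).1), h0, hk1,
      div_one]

/-- Extremal setup: `G` is a connected graph on `n ≥ 5000` vertices maximizing the
principal ratio among all connected graphs on `n` vertices; `x` is its principal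
eigenvector scaled so that the maximum entry is `1`; `v 0, …, v (k-1)` is a shortest path
from a minimum-entry vertex to a maximum-entry vertex, where `k - 1` is the shortest
distance between any minimum-entry vertex and any maximum-entry vertex. -/
theorem spectral_radius_lower_bound
    {n k : ℕ} (hn : 5000 ≤ n) (hk : 2 ≤ k)
    (G : SimpleGraph (Fin n))
    (lam : ℝ) (x : Fin n → ℝ)
    (hpe : IsPrincipalEigenpair G lam x)
    (hx1 : ∀ u, x u ≤ 1)
    (hext : ∀ (G' : SimpleGraph (Fin n)), G'.Connected →
      ∀ (lam' : ℝ) (x' : Fin n → ℝ), IsPrincipalEigenpair G' lam' x' →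
        pRatio x' ≤ pRatio x)
    (v : Fin k → Fin n) (hinj : Function.Injective v)
    (hpath : ∀ (i : ℕ) (hi : i + 1 < k), G.Adj (v ⟨i, by omega⟩) (v ⟨i + 1, hi⟩))
    (hmin : ∀ u, x (v ⟨0, by omega⟩) ≤ x u)
    (hvk : x (v ⟨k - 1, by omega⟩) = 1) :
    (n : ℝ) - k < lam := by
  have hkn : k ≤ n := by simpa using Fintype.card_le_of_injective v hinj
  by_contra! hlam
  rcases lt_or_ge (k + 1) n with hkn' | hkn'
  · obtain ⟨μ, y, hμ, hμ2, hy, hyk⟩ := exists_kite_eigenpair hk hkn'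
    have hratio := hext _ (kiteGraph_connected (by omega) hkn) μ y hy
    rw [hyk, pRatio_eq_div (fun u => hvk ▸ hx1 u) hmin, hvk, le_div_iff₀ (hpe.1 _)]
      at hratio
    have hend := hpe.lt_mul_cheb_of_path hk hμ2 (by linarith) v hinj hpath
    rw [hvk] at hend
    linarith
  · have h1 := hpe.one_lt_of_adj_of_adj (hpath 0 (by omega)) (hpath 1 (by omega))
      fun h => by simpa using hinj h
    have : (n : ℝ) ≤ k + 1 := by exact_mod_cast hkn'
    linarith
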